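/- (2π-rotation form of the half-odd-integer LSM obstruction.) Let N ≥ 1, let ι be a finite type, let A : ι → Matrix (Fin N) (Fin N) ℂ, and suppose there exists a unitary matrix X ∈ Matrix (Fin N) (Fin N) ℂ such that Xᴴ * A m * X = -(A m) for every m : ι (the on-site 2π rotation acts as −1 on the physical spin, i.e. the spin is half-odd-integer, and is implemented by X on the bond space). Then for every I ≥ 1 the map Γ_I is not injective. -/

import Mathlib

/-!
Since `Xᴴ A(σ₀) ⋯ A(σ_{I-1}) X = (-1)^I A(σ₀) ⋯ A(σ_{I-1})` and the trace is cyclic,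
`Γ_I (X M Xᴴ) = (-1)^I Γ_I M`. If `Γ_I` were injective, conjugation by `X` would be the scalar
`(-1)^I`; at `M = 1` this forces `(-1)^I = 1`, so `X` is central, whence `A m = Xᴴ A m X = -A m`.
Then `A = 0` and `Γ_I` vanishes identically, contradicting injectivity.
-/

open Matrix

/-- The MPS map `Γ_I`: given an MPS tensor `A`, length `I` and a boundary matrix `M`,
returns the coefficient function `σ ↦ trace (M * A (σ 0) * ⋯ * A (σ (I-1)))`. -/
noncomputable def GammaMPS {N : ℕ} {ι : Type*} (A : ι → Matrix (Fin N) (Fin N) ℂ)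
    (I : ℕ) (M : Matrix (Fin N) (Fin N) ℂ) : (Fin I → ι) → ℂ :=
  fun σ => Matrix.trace (M * (List.ofFn fun i => A (σ i)).prod)

theorem Unitary.star_mul_list_prod_mul {R : Type*} [Monoid R] [StarMul R] {u : R}
    (hu : u ∈ unitary R) (l : List R) :
    star u * l.prod * u = (l.map fun a => star u * a * u).prod := by
  induction l with
  | nil => simp [Unitary.star_mul_self_of_mem hu]
  | cons a l ih =>
    rw [List.map_cons, List.prod_cons, List.prod_cons, ← ih]
    simp only [mul_assoc, Unitary.mul_star_self_of_mem hu, ← mul_assoc u, one_mul]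

theorem List.prod_map_smul {S R : Type*} [Monoid S] [Monoid R] [MulAction S R]
    [IsScalarTower S R R] [SMulCommClass S R R] (c : S) (l : List R) :
    (l.map (c • ·)).prod = c ^ l.length • l.prod := by
  induction l with
  | nil => simp
  | cons a l ih =>
    rw [List.map_cons, List.prod_cons, ih, smul_mul_smul_comm, List.length_cons, pow_succ',
      List.prod_cons]

section GammaMPS

variable {N : ℕ} {ι : Type*} (A : ι → Matrix (Fin N) (Fin N) ℂ) (I : ℕ)

theorem GammaMPS_smul (c : ℂ) (M : Matrix (Fin N) (Fin N) ℂ) :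
    GammaMPS A I (c • M) = c • GammaMPS A I M := by
  ext σ
  simp [GammaMPS, Matrix.trace_smul]

theorem GammaMPS_zero_left (hI : I ≠ 0) (M : Matrix (Fin N) (Fin N) ℂ) :
    GammaMPS (0 : ι → Matrix (Fin N) (Fin N) ℂ) I M = 0 := by
  obtain ⟨n, rfl⟩ := Nat.exists_eq_succ_of_ne_zero hI
  ext σ
  simp [GammaMPS, List.ofFn_succ]

theorem conjTranspose_mul_prod_ofFn_mul {X : Matrix (Fin N) (Fin N) ℂ}
    (hX : X ∈ unitaryGroup (Fin N) ℂ) {c : ℂ} (hA : ∀ m, Xᴴ * A m * X = c • A m)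
    (σ : Fin I → ι) :
    Xᴴ * (List.ofFn fun i => A (σ i)).prod * X =
      c ^ I • (List.ofFn fun i => A (σ i)).prod := by
  rw [← star_eq_conjTranspose, Unitary.star_mul_list_prod_mul hX, List.map_ofFn]
  simp only [Function.comp_def, star_eq_conjTranspose, hA]
  simpa [Function.comp_def] using List.prod_map_smul c (List.ofFn fun i => A (σ i))

theorem GammaMPS_conj {X : Matrix (Fin N) (Fin N) ℂ} (hX : X ∈ unitaryGroup (Fin N) ℂ)
    {c : ℂ} (hA : ∀ m, Xᴴ * A m * X = c • A m) (M : Matrix (Fin N) (Fin N) ℂ) :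
    GammaMPS A I (X * M * Xᴴ) = c ^ I • GammaMPS A I M := by
  ext σ
  set P := (List.ofFn fun i => A (σ i)).prod
  calc trace (X * M * Xᴴ * P) = trace (X * (M * Xᴴ * P)) := by simp only [mul_assoc]
    _ = trace (M * Xᴴ * P * X) := trace_mul_comm _ _
    _ = trace (M * (Xᴴ * P * X)) := by simp only [mul_assoc]
    _ = c ^ I • trace (M * P) := by
      rw [conjTranspose_mul_prod_ofFn_mul A I hX hA, mul_smul_comm, trace_smul]

end GammaMPS

theorem two_pi_rotation_LSM_general {N : ℕ} (hN : 1 ≤ N) {ι : Type*}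
    (A : ι → Matrix (Fin N) (Fin N) ℂ)
    (X : Matrix (Fin N) (Fin N) ℂ)
    (hX : X ∈ Matrix.unitaryGroup (Fin N) ℂ)
    (hrot : ∀ m : ι, Xᴴ * A m * X = -(A m)) :
    ∀ I, 1 ≤ I → ¬ Function.Injective (GammaMPS A I) := by
  intro I hI hinj
  have : NeZero N := ⟨by omega⟩
  have hconj (M : Matrix (Fin N) (Fin N) ℂ) : X * M * Xᴴ = (-1 : ℂ) ^ I • M :=
    hinj <| by rw [GammaMPS_conj A I hX (c := -1) (by simpa using hrot), GammaMPS_smul]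
  have hsign : (-1 : ℂ) ^ I = 1 := by
    have h := hconj 1
    rw [mul_one, ← star_eq_conjTranspose, Unitary.mul_star_self_of_mem hX] at h
    exact smul_left_injective ℂ one_ne_zero (by simpa using h.symm)
  have hcentral (M : Matrix (Fin N) (Fin N) ℂ) : Xᴴ * M * X = M := by
    rw [← star_eq_conjTranspose, ← commute_unitary_iff_star_left_conjugate hX,
      commute_unitary_iff_star_right_conjugate hX, star_eq_conjTranspose, hconj, hsign, one_smul]
  have hA : A = 0 := by
    ext m i j
    exact self_eq_neg.1 <| by simpa [hcentral] using congrFun₂ (hrot m) i j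
  subst hA
  exact one_ne_zero <| hinj <| by
    rw [GammaMPS_zero_left I (by omega), GammaMPS_zero_left I (by omega)]

/-- 2π-rotation form of the half-odd-integer LSM obstruction: if the on-site 2π rotation
acts as `-1` on the physical spin and is implemented by a unitary `X` on the bond space,
then the MPS is not injective at any length. -/
theorem two_pi_rotation_LSM {N : ℕ} (hN : 1 ≤ N) {ι : Type*} [Fintype ι]
    (A : ι → Matrix (Fin N) (Fin N) ℂ)
    (X : Matrix (Fin N) (Fin N) ℂ)
    (hX : X ∈ Matrix.unitaryGroup (Fin N) ℂ)
    (hrot : ∀ m : ι, Xᴴ * A m * X = -(A m)) :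
    ∀ I, 1 ≤ I → ¬ Function.Injective (GammaMPS A I) :=
  two_pi_rotation_LSM_general hN A X hX hrot
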